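/- Let G be a finite simple graph of order n, size m, and minimum degree δ(G) ≥ 2, and let k ≥ 2 be an integer. Then γst(G^{1/k}) ≤ n if k = 2 or k = 3, and γst(G^{1/k}) ≤ n + m·⌈(k−3)/3⌉ if k ≥ 4. -/

import Mathlib

/-!
Keep every original vertex and, on the path replacing each edge, every third internal vertex
(positions `2, 5, 8, …`). Internal vertices have degree exactly `2` and original vertices keep
their degree `≥ 2` from `G`, so any neighbour in the set is strong enough; an internal vertex
at a position `≡ 0` (resp. `≡ 1`) mod `3` is dominated by its predecessor (resp. successor),
which is an original vertex or a chosen internal one. The set has `n + m⌊(k-1)/3⌋` vertices, and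
`⌊(k-1)/3⌋ = ⌈(k-3)/3⌉`, which vanishes for `k = 2, 3`.
-/

open SimpleGraph

/-- The degree of a vertex, as the cardinality of its neighbor set. -/
noncomputable def sdeg {V : Type*} (G : SimpleGraph V) (v : V) : ℕ :=
  (G.neighborSet v).ncard

/-- `D` is a strong dominating set of `G` if every vertex outside `D` has a neighbor
in `D` of at least the same degree. -/
def IsStrongDominatingSet {V : Type*} (G : SimpleGraph V) (D : Set V) : Prop :=
  ∀ x ∉ D, ∃ y ∈ D, G.Adj x y ∧ sdeg G x ≤ sdeg G y

/-- The strong domination number: minimum cardinality of a strong dominating set. -/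
noncomputable def strongDominationNumber {V : Type*} (G : SimpleGraph V) : ℕ :=
  sInf {n | ∃ D : Set V, IsStrongDominatingSet G D ∧ D.ncard = n}

/-- Subdivision of the edge `uv` of `G`: delete `uv`, add a new vertex `none`
adjacent to `u` and `v`. -/
def subdivide {V : Type*} (G : SimpleGraph V) (u v : V) : SimpleGraph (Option V) :=
  SimpleGraph.fromRel (fun a b =>
    match a, b with
    | some x, some y => G.Adj x y ∧ ¬(s(x, y) = s(u, v))
    | some x, none => x = u ∨ x = v
    | none, some _ => False
    | none, none => False)

/-- Contraction of the edge `uv` of `G`: the vertex `u` plays the role of the merged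
vertex, and `v` is removed. -/
def contractEdge {V : Type*} (G : SimpleGraph V) (u v : V) :
    SimpleGraph {x : V // x ≠ v} :=
  SimpleGraph.fromRel (fun a b =>
    G.Adj a.1 b.1 ∨ (a.1 = u ∧ G.Adj v b.1) ∨ (b.1 = u ∧ G.Adj a.1 v))

/-- The corona product `G1 ∘ G2`: one copy of `G1` together with one copy of `G2`
for each vertex `i` of `G1`, where `i` is joined to all vertices of its copy. -/
def corona {V1 V2 : Type*} (G1 : SimpleGraph V1) (G2 : SimpleGraph V2) :
    SimpleGraph (V1 ⊕ V1 × V2) :=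
  SimpleGraph.fromRel (fun a b =>
    match a, b with
    | .inl a, .inl b => G1.Adj a b
    | .inl a, .inr (i, _) => a = i
    | .inr _, .inl _ => False
    | .inr (i, x), .inr (j, y) => i = j ∧ G2.Adj x y)

/-- The `k`-subdivision `G^{1/k}` of `G`: every edge is replaced by a path of length
`k`, the internal vertices of the path replacing `e` being indexed by `e` and a
position in `Fin (k-1)` (an orientation of `e` is chosen via `Quot.out`). -/
noncomputable def kSubdivision {V : Type*} (G : SimpleGraph V) (k : ℕ) :
    SimpleGraph (V ⊕ G.edgeSet × Fin (k - 1)) :=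
  SimpleGraph.fromRel (fun a b =>
    match a, b with
    | .inl x, .inl y => k ≤ 1 ∧ G.Adj x y
    | .inl x, .inr (e, i) =>
        (x = (Quot.out (e : Sym2 V)).1 ∧ (i : ℕ) = 0) ∨
        (x = (Quot.out (e : Sym2 V)).2 ∧ (i : ℕ) = k - 2)
    | .inr _, .inl _ => False
    | .inr (e, i), .inr (f, j) => e = f ∧ (j : ℕ) = (i : ℕ) + 1)

lemma strongDominationNumber_le_ncard {V : Type*} {G : SimpleGraph V} {D : Set V}
    (hD : IsStrongDominatingSet G D) : strongDominationNumber G ≤ D.ncard :=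
  Nat.sInf_le ⟨D, hD, rfl⟩

lemma Fin.ncard_setOf_mod_three_eq_two_le (n : ℕ) :
    {i : Fin n | (i : ℕ) % 3 = 2}.ncard ≤ n / 3 := by
  have hmaps : ∀ i ∈ {i : Fin n | (i : ℕ) % 3 = 2}, (i : ℕ) / 3 ∈ Set.Iio (n / 3) := by
    intro i (hi : (i : ℕ) % 3 = 2)
    have := i.isLt
    simp only [Set.mem_Iio]
    omega
  have hinj : Set.InjOn (fun i : Fin n => (i : ℕ) / 3) {i | (i : ℕ) % 3 = 2} := by
    intro i (hi : (i : ℕ) % 3 = 2) j (hj : (j : ℕ) % 3 = 2) (h : (i : ℕ) / 3 = j / 3)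
    exact Fin.ext (by omega)
  simpa using Set.ncard_le_ncard_of_injOn _ hmaps hinj (Set.finite_Iio _)

lemma SimpleGraph.adj_quot_out {V : Type*} {G : SimpleGraph V} (e : G.edgeSet) :
    G.Adj (Quot.out (e : Sym2 V)).1 (Quot.out (e : Sym2 V)).2 := by
  rw [← mem_edgeSet, Sym2.mk, Prod.mk.eta, Quot.out_eq]
  exact e.2

namespace kSubdivision

variable {V : Type*} {G : SimpleGraph V} {k : ℕ}

lemma adj_inl_inr {x : V} {e : G.edgeSet} {i : Fin (k - 1)} :
    (kSubdivision G k).Adj (.inl x) (.inr (e, i)) ↔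
      (x = (Quot.out (e : Sym2 V)).1 ∧ (i : ℕ) = 0) ∨
        (x = (Quot.out (e : Sym2 V)).2 ∧ (i : ℕ) = k - 2) := by
  simp [kSubdivision]

lemma adj_inr_inr {e f : G.edgeSet} {i j : Fin (k - 1)} :
    (kSubdivision G k).Adj (.inr (e, i)) (.inr (f, j)) ↔
      e = f ∧ ((j : ℕ) = i + 1 ∨ (i : ℕ) = j + 1) := by
  simp only [kSubdivision, fromRel_adj, ne_eq, Sum.inr.injEq, Prod.mk.injEq, Fin.ext_iff]
  grind

lemma exists_adj_inl_inr (hk : 2 ≤ k) {v w : V} (hvw : G.Adj v w) :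
    ∃ p : G.edgeSet × Fin (k - 1),
      (p.1 : Sym2 V) = s(v, w) ∧ (kSubdivision G k).Adj (.inl v) (.inr p) := by
  set e : G.edgeSet := ⟨s(v, w), hvw⟩
  have hout : s((Quot.out (e : Sym2 V)).1, (Quot.out (e : Sym2 V)).2) = s(v, w) := Quot.out_eq _
  rcases Sym2.eq_iff.mp hout with ⟨h, -⟩ | ⟨-, h⟩
  · exact ⟨(e, ⟨0, by omega⟩), rfl, adj_inl_inr.mpr (.inl ⟨h.symm, rfl⟩)⟩
  · exact ⟨(e, ⟨k - 2, by omega⟩), rfl, adj_inl_inr.mpr (.inr ⟨h.symm, rfl⟩)⟩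

noncomputable def prev (e : G.edgeSet) (i : Fin (k - 1)) : V ⊕ G.edgeSet × Fin (k - 1) :=
  if (i : ℕ) = 0 then .inl (Quot.out (e : Sym2 V)).1 else .inr (e, ⟨i - 1, by omega⟩)

noncomputable def next (e : G.edgeSet) (i : Fin (k - 1)) : V ⊕ G.edgeSet × Fin (k - 1) :=
  if h : (i : ℕ) = k - 2 then .inl (Quot.out (e : Sym2 V)).2 else .inr (e, ⟨i + 1, by omega⟩)

lemma adj_inr_iff {e : G.edgeSet} {i : Fin (k - 1)} {z : V ⊕ G.edgeSet × Fin (k - 1)} :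
    (kSubdivision G k).Adj (.inr (e, i)) z ↔ z = prev e i ∨ z = next e i := by
  have := i.isLt
  rcases z with x | ⟨f, j⟩
  · rw [adj_comm, adj_inl_inr, prev, next]
    split_ifs <;> grind
  · rw [adj_inr_inr, prev, next]
    split_ifs <;> simp [Fin.ext_iff] <;> grind

lemma prev_ne_next (e : G.edgeSet) (i : Fin (k - 1)) : prev e i ≠ next e i := by
  unfold prev next
  split_ifs <;> simp [Fin.ext_iff, (adj_quot_out e).ne]

lemma sdeg_inr (e : G.edgeSet) (i : Fin (k - 1)) : sdeg (kSubdivision G k) (.inr (e, i)) = 2 := by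
  have hN : (kSubdivision G k).neighborSet (.inr (e, i)) = {prev e i, next e i} := by
    ext z
    exact adj_inr_iff
  rw [sdeg, hN, Set.ncard_pair (prev_ne_next e i)]

lemma sdeg_le_sdeg_inl [Finite V] (hk : 2 ≤ k) (v : V) :
    sdeg G v ≤ sdeg (kSubdivision G k) (.inl v) := by
  choose p hp_edge hp_adj using fun w (hw : G.Adj v w) => exists_adj_inl_inr hk hw
  rw [sdeg, sdeg, ← Nat.card_coe_set_eq, ← Nat.card_coe_set_eq]
  refine Nat.card_le_card_of_injective (fun w => ⟨.inr (p w w.2), hp_adj w w.2⟩) ?_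
  rintro ⟨w₁, hw₁⟩ ⟨w₂, hw₂⟩ h
  have hedge : s(v, w₁) = s(v, w₂) := by
    rw [← hp_edge w₁ hw₁, ← hp_edge w₂ hw₂, Sum.inr_injective (Subtype.ext_iff.mp h)]
  exact Subtype.ext (Sym2.congr_right.mp hedge)

def dominatingSet (G : SimpleGraph V) (k : ℕ) : Set (V ⊕ G.edgeSet × Fin (k - 1)) :=
  Set.range Sum.inl ∪ Sum.inr '' (Set.univ ×ˢ {i : Fin (k - 1) | (i : ℕ) % 3 = 2})

lemma prev_mem_dominatingSet {e : G.edgeSet} {i : Fin (k - 1)} (hi : (i : ℕ) % 3 = 0) :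
    prev e i ∈ dominatingSet G k := by
  unfold prev
  split_ifs with h0
  · exact Or.inl ⟨_, rfl⟩
  · refine Or.inr ⟨_, ⟨trivial, ?_⟩, rfl⟩
    show ((i : ℕ) - 1) % 3 = 2
    omega

lemma next_mem_dominatingSet {e : G.edgeSet} {i : Fin (k - 1)} (hi : (i : ℕ) % 3 = 1) :
    next e i ∈ dominatingSet G k := by
  unfold next
  split_ifs with hlast
  · exact Or.inl ⟨_, rfl⟩
  · refine Or.inr ⟨_, ⟨trivial, ?_⟩, rfl⟩
    show ((i : ℕ) + 1) % 3 = 2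
    omega

lemma isStrongDominatingSet_dominatingSet [Finite V] (hδ : ∀ v : V, 2 ≤ sdeg G v) :
    IsStrongDominatingSet (kSubdivision G k) (dominatingSet G k) := by
  rintro (v | ⟨e, i⟩) hx
  · exact absurd (Or.inl ⟨v, rfl⟩) hx
  have hk : 2 ≤ k := by have := i.isLt; omega
  have hi : (i : ℕ) % 3 ≠ 2 := fun h => hx (Or.inr ⟨(e, i), ⟨trivial, h⟩, rfl⟩)
  obtain ⟨y, hyD, hy⟩ : ∃ y ∈ dominatingSet G k, y = prev e i ∨ y = next e i := by
    rcases (by omega : (i : ℕ) % 3 = 0 ∨ (i : ℕ) % 3 = 1) with h | h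
    · exact ⟨_, prev_mem_dominatingSet h, .inl rfl⟩
    · exact ⟨_, next_mem_dominatingSet h, .inr rfl⟩
  refine ⟨y, hyD, adj_inr_iff.mpr hy, ?_⟩
  rw [sdeg_inr]
  rcases y with w | ⟨f, j⟩
  · exact (hδ w).trans (sdeg_le_sdeg_inl hk w)
  · exact (sdeg_inr f j).ge

lemma ncard_dominatingSet_le [Fintype V] :
    (dominatingSet G k).ncard ≤ Fintype.card V + G.edgeSet.ncard * ((k - 1) / 3) :=
  calc (dominatingSet G k).ncard
      ≤ (Set.range (Sum.inl : V → V ⊕ G.edgeSet × Fin (k - 1))).ncard +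
          (Set.univ ×ˢ {i : Fin (k - 1) | (i : ℕ) % 3 = 2}).ncard :=
        (Set.ncard_union_le _ _).trans_eq <| by
          rw [Set.ncard_image_of_injective _ Sum.inr_injective]
    _ ≤ Fintype.card V + G.edgeSet.ncard * ((k - 1) / 3) := by
        rw [← Set.image_univ, Set.ncard_image_of_injective _ Sum.inl_injective, Set.ncard_prod,
          Set.ncard_univ, Set.ncard_univ, Nat.card_eq_fintype_card, Nat.card_coe_set_eq]
        gcongr
        exact Fin.ncard_setOf_mod_three_eq_two_le _

end kSubdivision

theorem strongDominationNumber_kSubdivision_minDegree_two_le_general {V : Type*} [Fintype V]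
    (G : SimpleGraph V) (hδ : ∀ v : V, 2 ≤ sdeg G v) (k : ℕ) :
    ((k = 2 ∨ k = 3) →
      strongDominationNumber (kSubdivision G k) ≤ Fintype.card V) ∧
    (4 ≤ k →
      strongDominationNumber (kSubdivision G k) ≤
        Fintype.card V + G.edgeSet.ncard * ((k - 3 + 2) / 3)) := by
  have key : strongDominationNumber (kSubdivision G k) ≤
      Fintype.card V + G.edgeSet.ncard * ((k - 1) / 3) :=
    (strongDominationNumber_le_ncard (kSubdivision.isStrongDominatingSet_dominatingSet hδ)).trans
      kSubdivision.ncard_dominatingSet_le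
  refine ⟨?_, fun h4 => ?_⟩
  · rintro (rfl | rfl) <;> simpa using key
  · rwa [show k - 3 + 2 = k - 1 by omega]

/-- If `δ(G) ≥ 2`, then `γst(G^{1/k}) ≤ n` for `k = 2, 3` and
`γst(G^{1/k}) ≤ n + m⌈(k-3)/3⌉` for `k ≥ 4`. -/
theorem strongDominationNumber_kSubdivision_minDegree_two_le {V : Type*} [Fintype V]
    (G : SimpleGraph V) (hδ : ∀ v : V, 2 ≤ sdeg G v) (k : ℕ) (hk : 2 ≤ k) :
    ((k = 2 ∨ k = 3) →
      strongDominationNumber (kSubdivision G k) ≤ Fintype.card V) ∧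
    (4 ≤ k →
      strongDominationNumber (kSubdivision G k) ≤
        Fintype.card V + G.edgeSet.ncard * ((k - 3 + 2) / 3)) :=
  strongDominationNumber_kSubdivision_minDegree_two_le_general G hδ k
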